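/- There is no pair consisting of an ℝ-linear map J : g → g and a ℂ-valued ℝ-bilinear alternating form ε on g satisfying (1) J∘J = −id; (2) ω(Ju,Jv) = ω(u,v) for all u,v and ω(u,Ju) > 0 for all u ≠ 0; (3) ε(Ju,v) = i·ε(u,v) for all u,v; (4) (ε∧ε̄)(X₁,X₂,X₃,T) = (1/2)(ω∧ω)(X₁,X₂,X₃,T); (5) Re ε([u,v],w) + Re ε([v,w],u) + Re ε([w,u],v) = 0 for all u,v,w ∈ g; and additionally Im ε(X₃,T) = 0. Equivalently, for every left-invariant generalized Calabi–Yau structure (ω,J,ε) one has Im ε(X₃,T) ≠ 0, so the Lagrangian foliation with leaves tangent to span{X₃,T} (the case e = ±∞) is not special Lagrangian with respect to any such structure. -/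
import Mathlib


noncomputable section

/-- The Lie algebra `g`, with coordinates in the basis `X₁, X₂, X₃, T`. -/
abbrev G4 : Type := ℝ × ℝ × ℝ × ℝ

/-- The bracket of `g`: the only nonvanishing basis bracket is `[X₁,X₂] = X₃`. -/
def b4 (X Y : G4) : G4 := (0, 0, X.1 * Y.2.1 - X.2.1 * Y.1, 0)

/-- The symplectic form `ω(X,Y) = 2π(x₁y₃ − x₃y₁ + x₂y₄ − x₄y₂)`. -/
def ω (u v : G4) : ℝ :=
  2 * Real.pi * (u.1 * v.2.2.1 - u.2.2.1 * v.1 + u.2.1 * v.2.2.2 - u.2.2.2 * v.2.1)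

/-- `ω` with values coerced into `ℂ`. -/
def ωc (u v : G4) : ℂ := ((ω u v : ℝ) : ℂ)

/-- The wedge of two `ℂ`-valued alternating bilinear forms, as a 4-form. -/
def wedge (α β : G4 → G4 → ℂ) (v1 v2 v3 v4 : G4) : ℂ :=
  α v1 v2 * β v3 v4 - α v1 v3 * β v2 v4 + α v1 v4 * β v2 v3 +
    α v2 v3 * β v1 v4 - α v2 v4 * β v1 v3 + α v3 v4 * β v1 v2

def e1 : G4 := (1, 0, 0, 0)
def e2 : G4 := (0, 1, 0, 0)
def e3 : G4 := (0, 0, 1, 0)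
def e4 : G4 := (0, 0, 0, 1)

/-- There is no left-invariant generalized Calabi–Yau structure `(ω, J, ε)` with
`Im ε(X₃,T) = 0`: the Lagrangian foliation tangent to `span{X₃,T}` (the case
`e = ±∞`) is not special Lagrangian for any such structure. -/
theorem stmt9 :
    ¬ ∃ (J : G4 →ₗ[ℝ] G4) (ε : G4 →ₗ[ℝ] G4 →ₗ[ℝ] ℂ),
      (∀ u : G4, ε u u = 0) ∧
      (∀ u : G4, J (J u) = -u) ∧
      (∀ u v : G4, ω (J u) (J v) = ω u v) ∧
      (∀ u : G4, u ≠ 0 → 0 < ω u (J u)) ∧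
      (∀ u v : G4, ε (J u) v = Complex.I * ε u v) ∧
      (wedge (fun u v => ε u v) (fun u v => (starRingEnd ℂ) (ε u v)) e1 e2 e3 e4 =
        (1 / 2) * wedge ωc ωc e1 e2 e3 e4) ∧
      (∀ u v w : G4,
        (ε (b4 u v) w).re + (ε (b4 v w) u).re + (ε (b4 w u) v).re = 0) ∧
      (ε e3 e4).im = 0 := by
  rintro ⟨J, ε, halt, hJ2, hωJ, hpos, hJe, hwedge, hcyc, him⟩
  have hskew : ∀ u v : G4, ε u v = - ε v u := by
    intro u v
    have h := halt (u + v)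
    simp only [map_add, LinearMap.add_apply] at h
    rw [halt u, halt v] at h
    linear_combination h
  have hJe2 : ∀ u v : G4, ε u (J v) = Complex.I * ε u v := by
    intro u v
    rw [hskew u (J v), hJe, hskew v u]
    ring
  have h34re : (ε e3 e4).re = 0 := by
    have h := hcyc e1 e2 e4
    have hb1 : b4 e1 e2 = e3 := by norm_num [b4, e1, e2, e3]
    have hb2 : b4 e2 e4 = (0 : G4) := by norm_num [b4, e2, e4]
    have hb3 : b4 e4 e1 = (0 : G4) := by norm_num [b4, e1, e4]
    rw [hb1, hb2, hb3] at h
    simpa using h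
  have h34 : ε e3 e4 = 0 := Complex.ext h34re him
  have he3ne : e3 ≠ (0 : G4) := by simp [e3, Prod.ext_iff]
  by_cases hcase : ∃ α β : ℝ, e4 = α • e3 + β • (J e3)
  · obtain ⟨α, β, hab⟩ := hcase
    have hω34 : ω e3 e4 = 0 := by norm_num [ω, e3, e4]
    have hω33 : ω e3 e3 = 0 := by norm_num [ω, e3]
    have hexp : ω e3 e4 = α * ω e3 e3 + β * ω e3 (J e3) := by
      rw [hab]
      simp only [ω, Prod.fst_add, Prod.snd_add, Prod.smul_fst, Prod.smul_snd, smul_eq_mul]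
      ring
    have hp := hpos e3 he3ne
    have hβ : β = 0 := by
      rw [hω34, hω33] at hexp
      nlinarith
    rw [hβ, zero_smul, add_zero] at hab
    have h4 : (e4 : G4).2.2.2 = (α • e3).2.2.2 := by rw [hab]
    simp [e3, e4] at h4
  · set v : Fin 4 → G4 := ![e3, J e3, e4, J e4] with hv
    have k1 : ε e3 (J e3) = 0 := by rw [hJe2, halt, mul_zero]
    have k2 : ε e3 (J e4) = 0 := by rw [hJe2, h34, mul_zero]
    have k4 : ε e4 (J e4) = 0 := by rw [hJe2, halt, mul_zero]
    have k5 : ε (J e3) (J e4) = 0 := by rw [hJe, k2, mul_zero]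
    have k6 : ε (J e3) e4 = 0 := by rw [hJe, h34, mul_zero]
    have hvvals : ∀ i j : Fin 4, ε (v i) (v j) = 0 := by
      intro i j
      fin_cases i <;> fin_cases j <;>
        simp only [hv, Matrix.cons_val_zero, Matrix.cons_val_one, Matrix.head_cons,
          Matrix.cons_val_two, Matrix.tail_cons, Matrix.cons_val_three] <;>
        first
          | exact halt _
          | exact h34
          | exact k1
          | exact k2
          | exact k4
          | exact k5
          | exact k6
          | (rw [hskew]; simp [halt, h34, k1, k2, k4, k5, k6])
    have hind : LinearIndependent ℝ v := by
      rw [Fintype.linearIndependent_iff]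
      intro g hg
      have hg' : g 0 • e3 + g 1 • J e3 + g 2 • e4 + g 3 • J e4 = 0 := by
        have := hg
        rw [Fin.sum_univ_four] at this
        simpa [hv] using this
      have hgJ : g 0 • J e3 - g 1 • e3 + g 2 • J e4 - g 3 • e4 = 0 := by
        have h := congrArg J hg'
        simp only [map_add, map_smul, hJ2, map_zero, smul_neg] at h
        linear_combination (norm := module) h
      have hg23 : g 2 = 0 ∧ g 3 = 0 := by
        by_contra hne
        have hs : g 2 ^ 2 + g 3 ^ 2 ≠ 0 := by
          rcases not_and_or.mp hne with h' | h' <;> positivity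
        have eqC : (g 2 ^ 2 + g 3 ^ 2) • e4 =
            (-(g 2 * g 0 + g 3 * g 1)) • e3 + (g 3 * g 0 - g 2 * g 1) • J e3 := by
          linear_combination (norm := module) (g 2 : ℝ) • hg' - (g 3 : ℝ) • hgJ
        apply hcase
        refine ⟨(g 2 ^ 2 + g 3 ^ 2)⁻¹ * (-(g 2 * g 0 + g 3 * g 1)),
          (g 2 ^ 2 + g 3 ^ 2)⁻¹ * (g 3 * g 0 - g 2 * g 1), ?_⟩
        have := congrArg (fun x => (g 2 ^ 2 + g 3 ^ 2)⁻¹ • x) eqC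
        simp only [smul_add, smul_smul, inv_mul_cancel₀ hs, one_smul] at this
        exact this
      obtain ⟨h2, h3⟩ := hg23
      have eqD : (g 0 ^ 2 + g 1 ^ 2) • e3 = (0 : G4) := by
        rw [h2, h3] at hg' hgJ
        linear_combination (norm := module) (g 0 : ℝ) • hg' - (g 1 : ℝ) • hgJ
      have h01 : g 0 ^ 2 + g 1 ^ 2 = 0 := by
        rcases smul_eq_zero.mp eqD with h | h
        · exact h
        · exact absurd h he3ne
      have h0 : g 0 = 0 := by nlinarith
      have h1 : g 1 = 0 := by nlinarith
      intro i
      fin_cases i <;> assumption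
    have hspan : Submodule.span ℝ (Set.range v) = ⊤ := by
      apply hind.span_eq_top_of_card_eq_finrank
      simp [Module.finrank_prod]
    have key : ∀ x y : G4, ε x y = 0 := by
      intro x y
      have hx : x ∈ Submodule.span ℝ (Set.range v) := hspan ▸ Submodule.mem_top
      have hy : y ∈ Submodule.span ℝ (Set.range v) := hspan ▸ Submodule.mem_top
      refine Submodule.span_induction₂ (p := fun x y _ _ => ε x y = 0) ?_ ?_ ?_ ?_ ?_ ?_ ?_ hx hy
      · rintro x y ⟨i, rfl⟩ ⟨j, rfl⟩; exact hvvals i j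
      · intros; simp
      · intros; simp
      · intro a b c _ _ _ ha hb; simp [map_add, LinearMap.add_apply, ha, hb]
      · intro a b c _ _ _ ha hb; simp [map_add, ha, hb]
      · intro r a b _ _ hab; simp [map_smul, LinearMap.smul_apply, hab]
      · intro r a b _ _ hab; simp [map_smul, hab]
    have hL : wedge (fun u v => ε u v) (fun u v => (starRingEnd ℂ) (ε u v)) e1 e2 e3 e4 = 0 := by
      simp [wedge, key]
    have hR : wedge ωc ωc e1 e2 e3 e4 = ((-8 * Real.pi ^ 2 : ℝ) : ℂ) := by
      simp only [wedge, ωc, ω, e1, e2, e3, e4]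
      push_cast
      ring
    rw [hL, hR] at hwedge
    have hπ : Real.pi ≠ 0 := Real.pi_ne_zero
    rw [eq_comm, mul_eq_zero] at hwedge
    rcases hwedge with h | h
    · norm_num at h
    · rw [Complex.ofReal_eq_zero] at h
      nlinarith [Real.pi_pos]

end
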